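/- Every nontrivial idempotent semifield S that is generated as a kernel by a single element has a generator a with a > 1. More generally, if S is generated as a kernel by finitely many elements a₁,…,aₙ, then S is a principal kernel, generated by the single element |a₁| + ⋯ + |aₙ|. -/

import Mathlib

/-- An idempotent semifield structure on a multiplicative abelian group `S`:
a commutative, associative, idempotent addition over which multiplication
distributes. The induced order is `a ≤ b ↔ a + b = b`. -/
structure IdemSemifieldStr (S : Type*) [CommGroup S] where
  add : S → S → S
  add_comm : ∀ a b, add a b = add b a
  add_assoc : ∀ a b c, add (add a b) c = add a (add b c)
  add_idem : ∀ a, add a a = a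
  mul_dist : ∀ g a b, g * add a b = add (g * a) (g * b)

namespace IdemSemifieldStr

variable {S : Type*} [CommGroup S] (A : IdemSemifieldStr S)

/-- The lattice order: `a ≤ b` iff `a + b = b`. -/
def le (a b : S) : Prop := A.add a b = b

/-- The norm `|a| = a + a⁻¹`. -/
def abs (a : S) : S := A.add a a⁻¹

/-- A kernel: a convex multiplicative subgroup. -/
def IsKernel (K : Set S) : Prop :=
  (1 : S) ∈ K ∧ (∀ a ∈ K, ∀ b ∈ K, a * b ∈ K) ∧ (∀ a ∈ K, a⁻¹ ∈ K) ∧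
  (∀ a ∈ K, ∀ b ∈ K, ∀ α β : S, A.add α β = 1 → A.add (α * a) (β * b) ∈ K)

/-- The kernel generated by a set: the intersection of all kernels containing it. -/
def kgen (T : Set S) : Set S := ⋂₀ {K : Set S | A.IsKernel K ∧ T ⊆ K}

end IdemSemifieldStr

/-!
In the lattice order, `1 ≤ |w|` and `w, w⁻¹ ≤ |w|`, so `w + 1` and `w⁻¹ + 1` lie between `1`
and `|w|`; by convexity a kernel containing an upper bound `e` of `|w|` contains both, hence
also their quotient `w = (w + 1)(w⁻¹ + 1)⁻¹`. Thus `⟨e⟩` contains every element whose norm is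
at most `e`. For `e = |a₁| + ⋯ + |aₙ|` this gives `S = ⟨a₁, …, aₙ⟩ ⊆ ⟨e⟩`, and for a single
generator `u` the generator `|u| ≥ 1` differs from `1` unless `u = 1`, i.e. unless `S` is trivial.
-/

namespace IdemSemifieldStr

variable {S : Type*} [CommGroup S] (A : IdemSemifieldStr S)

theorem le_refl (a : S) : A.le a a := A.add_idem a

theorem le_add_left (a b : S) : A.le a (A.add a b) := by
  rw [le, ← A.add_assoc, A.add_idem]

theorem le_add_right (a b : S) : A.le b (A.add a b) := by
  rw [A.add_comm]
  exact A.le_add_left b a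

theorem mul_le_mul_left {a b : S} (c : S) (h : A.le a b) : A.le (c * a) (c * b) := by
  rw [le, ← A.mul_dist, h]

variable {A}

theorem le.trans {a b c : S} (hab : A.le a b) (hbc : A.le b c) : A.le a c := by
  rw [le, ← hbc, ← A.add_assoc, hab]

theorem le.antisymm {a b : S} (hab : A.le a b) (hba : A.le b a) : a = b := by
  rw [← hab, A.add_comm, hba]

theorem add_le {a b c : S} (hac : A.le a c) (hbc : A.le b c) : A.le (A.add a b) c := by
  rw [le, A.add_assoc, hbc, hac]

theorem mul_le_mul {a b c d : S} (hab : A.le a b) (hcd : A.le c d) : A.le (a * c) (b * d) := by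
  have hac : A.le (a * c) (b * c) := by
    simpa only [mul_comm c] using A.mul_le_mul_left c hab
  exact hac.trans (A.mul_le_mul_left b hcd)

theorem le_foldr_add {a b : S} {l : List S} (h : a ∈ b :: l) : A.le a (l.foldr A.add b) := by
  induction l with
  | nil =>
    rw [List.mem_singleton.1 h]
    exact A.le_refl b
  | cons c l ih =>
    rcases List.mem_cons.1 h with rfl | h
    · exact (ih List.mem_cons_self).trans (A.le_add_right c _)
    · rcases List.mem_cons.1 h with rfl | h
      · exact A.le_add_left a _
      · exact (ih (List.mem_cons_of_mem b h)).trans (A.le_add_right c _)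

theorem one_le_of_one_le_mul_self {e : S} (h : A.le 1 (e * e)) : A.le 1 e := by
  -- `(e + 1)² = e² + e + 1 = e² + e = e (e + 1)`, and cancelling `e + 1` leaves `e + 1 = e`.
  have hsq : A.add e 1 * A.add e 1 = e * A.add e 1 := by
    rw [A.mul_dist, mul_one, mul_comm, A.mul_dist e e 1, mul_one, A.add_assoc,
      ← A.add_assoc e e, A.add_idem, A.add_comm e 1, ← A.add_assoc, A.add_comm (e * e) 1, h]
  have he : A.add e 1 = e := mul_right_cancel hsq
  rw [le, A.add_comm, he]

theorem le_abs (a : S) : A.le a (A.abs a) := A.le_add_left a a⁻¹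

theorem inv_le_abs (a : S) : A.le a⁻¹ (A.abs a) := A.le_add_right a a⁻¹

theorem one_le_abs (a : S) : A.le 1 (A.abs a) := by
  refine one_le_of_one_le_mul_self ?_
  rw [← mul_inv_cancel a]
  exact mul_le_mul (le_abs a) (inv_le_abs a)

theorem eq_one_of_abs_eq_one {a : S} (h : A.abs a = 1) : a = 1 := by
  have hinv : A.le a⁻¹ 1 := h ▸ inv_le_abs a
  have hle : A.le 1 a := by
    simpa only [mul_inv_cancel, mul_one] using A.mul_le_mul_left a hinv
  exact (h ▸ le_abs a : A.le a 1).antisymm hle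

namespace IsKernel

variable {K : Set S}

theorem one_mem (hK : A.IsKernel K) : (1 : S) ∈ K := hK.1

theorem mul_mem (hK : A.IsKernel K) {a b : S} (ha : a ∈ K) (hb : b ∈ K) : a * b ∈ K :=
  hK.2.1 a ha b hb

theorem inv_mem (hK : A.IsKernel K) {a : S} (ha : a ∈ K) : a⁻¹ ∈ K := hK.2.2.1 a ha

theorem mem_of_one_le_of_le (hK : A.IsKernel K) {g h : S} (hh : h ∈ K) (h1g : A.le 1 g)
    (hgh : A.le g h) : g ∈ K := by
  -- `g` is the convex combination `(g h⁻¹) h + 1 · 1`.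
  have hcoeff : A.add (g * h⁻¹) 1 = 1 := by
    calc A.add (g * h⁻¹) 1 = h⁻¹ * A.add g h := by rw [A.mul_dist, mul_comm, inv_mul_cancel]
      _ = 1 := by rw [hgh, inv_mul_cancel]
  have hconv := hK.2.2.2 h hh 1 hK.one_mem (g * h⁻¹) 1 hcoeff
  rwa [inv_mul_cancel_right, one_mul, A.add_comm, h1g] at hconv

theorem mem_of_abs_le (hK : A.IsKernel K) {w e : S} (he : e ∈ K) (hw : A.le (A.abs w) e) :
    w ∈ K := by
  have hpos : A.add w 1 ∈ K :=
    hK.mem_of_one_le_of_le he (A.le_add_right _ _) (add_le (le_abs w) (one_le_abs w) |>.trans hw)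
  have hneg : A.add w⁻¹ 1 ∈ K :=
    hK.mem_of_one_le_of_le he (A.le_add_right _ _)
      (add_le (inv_le_abs w) (one_le_abs w) |>.trans hw)
  have hw_eq : w = A.add w 1 * (A.add w⁻¹ 1)⁻¹ := by
    rw [eq_mul_inv_iff_mul_eq, A.mul_dist, mul_inv_cancel, mul_one, A.add_comm]
  exact hw_eq ▸ hK.mul_mem hpos (hK.inv_mem hneg)

end IsKernel

variable (A)

theorem isKernel_singleton_one : A.IsKernel {1} := by
  refine ⟨rfl, ?_, ?_, ?_⟩
  · rintro a rfl b rfl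
    exact mul_one 1
  · rintro a rfl
    exact inv_one
  · rintro a rfl b rfl α β hαβ
    simpa only [mul_one, Set.mem_singleton_iff] using hαβ

theorem subset_kgen (T : Set S) : T ⊆ A.kgen T :=
  fun _ hx => Set.mem_sInter.2 fun _ hK => hK.2 hx

theorem kgen_subset {T K : Set S} (hK : A.IsKernel K) (hT : T ⊆ K) : A.kgen T ⊆ K :=
  fun _ hx => Set.mem_sInter.1 hx K ⟨hK, hT⟩

theorem isKernel_kgen (T : Set S) : A.IsKernel (A.kgen T) := by
  have mem {x : S} : x ∈ A.kgen T ↔ ∀ K, A.IsKernel K → T ⊆ K → x ∈ K :=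
    Set.mem_sInter.trans ⟨fun h K hK hT => h K ⟨hK, hT⟩, fun h K hK => h K hK.1 hK.2⟩
  refine ⟨?_, ?_, ?_, ?_⟩
  · exact mem.2 fun K hK _ => hK.one_mem
  · exact fun a ha b hb => mem.2 fun K hK hT => hK.mul_mem (mem.1 ha K hK hT) (mem.1 hb K hK hT)
  · exact fun a ha => mem.2 fun K hK hT => hK.inv_mem (mem.1 ha K hK hT)
  · exact fun a ha b hb α β hαβ => mem.2 fun K hK hT =>
      hK.2.2.2 a (mem.1 ha K hK hT) b (mem.1 hb K hK hT) α β hαβ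

theorem kgen_singleton_one : A.kgen {1} = {1} :=
  (A.kgen_subset A.isKernel_singleton_one subset_rfl).antisymm (A.subset_kgen _)

variable {A}

theorem kgen_singleton_eq_univ_of_abs_le {T : Set S} {e : S} (hT : A.kgen T = Set.univ)
    (hle : ∀ w ∈ T, A.le (A.abs w) e) : A.kgen {e} = Set.univ := by
  have hK := A.isKernel_kgen {e}
  refine Set.eq_univ_of_univ_subset (hT ▸ A.kgen_subset hK fun w hw => ?_)
  exact hK.mem_of_abs_le (A.subset_kgen _ rfl) (hle w hw)

end IdemSemifieldStr

open IdemSemifieldStr in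
/-- Every nontrivial principal idempotent semifield has a generator a > 1;
and if S is generated as a kernel by finitely many elements a₀, a₁, …, aₙ
then it is principal, generated by |a₀| + |a₁| + ⋯ + |aₙ|. -/
theorem principal_semifield_generator {S : Type*} [CommGroup S]
    (A : IdemSemifieldStr S) :
    ((∃ u : S, A.kgen {u} = Set.univ) → (∃ s : S, s ≠ 1) →
      ∃ a : S, A.kgen {a} = Set.univ ∧ A.le 1 a ∧ a ≠ 1) ∧
    (∀ (x : S) (xs : List S),
      A.kgen (insert x {y | y ∈ xs}) = Set.univ →
      A.kgen {(xs.map A.abs).foldr A.add (A.abs x)} = Set.univ) := by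
  constructor
  · rintro ⟨u, hu⟩ ⟨s, hs⟩
    have habs : A.kgen {A.abs u} = Set.univ :=
      kgen_singleton_eq_univ_of_abs_le hu fun w hw => hw ▸ A.le_refl _
    refine ⟨A.abs u, habs, one_le_abs u, fun h1 => hs ?_⟩
    have hs_mem : s ∈ A.kgen {1} := by rw [← eq_one_of_abs_eq_one h1, hu]; trivial
    rwa [kgen_singleton_one] at hs_mem
  · intro x xs hgen
    refine kgen_singleton_eq_univ_of_abs_le hgen fun w hw => le_foldr_add ?_
    rcases hw with rfl | hw
    · exact List.mem_cons_self
    · exact List.mem_cons_of_mem _ (List.mem_map_of_mem hw)
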